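/- arXiv:1902.00519 — 3 statements merged into one kernel-verified Lean document; each statement's English description precedes it below -/
import Mathlib

section
/- Let n ≥ 1 be a natural number and K_Λ > 0. Let f : [λ₁, λ₂] → ℝ be a differentiable function with f(λ) ≥ 0 for all λ ∈ [λ₁, λ₂], satisfying the differential inequality f'(λ) ≤ −(1/n)·f(λ)·(f(λ) + K_Λ)·(f(λ) − K_Λ) for all λ ∈ [λ₁, λ₂]. Then f(λ₂) − K_Λ ≤ e^{−(2/n)·K_Λ²·(λ₂−λ₁)} · max(f(λ₁) − K_Λ, 0). In particular, if f(λ₁) > K_Λ then f(λ₂) ≤ K_Λ + e^{−(2/n)·K_Λ²·(λ₂−λ₁)}·(f(λ₁) − K_Λ), and if f(λ₁) ≤ K_Λ then f(λ₂) ≤ K_Λ. -/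
open Set Filter Real
open scoped Topology

/-- Scalar ODE-comparison content of Theorem 2 of the paper: if `f ≥ 0` satisfies
`f' ≤ -(1/n) f (f + K_Λ) (f - K_Λ)` on `[λ₁, λ₂]`, then
`f λ₂ - K_Λ ≤ exp (-(2/n) K_Λ² (λ₂ - λ₁)) * max (f λ₁ - K_Λ) 0`; in particular
the stated consequences according to whether `f λ₁ > K_Λ` or `f λ₁ ≤ K_Λ`. -/
theorem stmt_0 (n : ℕ) (hn : 1 ≤ n) (KΛ : ℝ) (hKΛ : 0 < KΛ)
    (lam₁ lam₂ : ℝ) (hlam : lam₁ ≤ lam₂)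
    (f f' : ℝ → ℝ)
    (hderiv : ∀ x ∈ Set.Icc lam₁ lam₂, HasDerivWithinAt f (f' x) (Set.Icc lam₁ lam₂) x)
    (hnonneg : ∀ x ∈ Set.Icc lam₁ lam₂, 0 ≤ f x)
    (hode : ∀ x ∈ Set.Icc lam₁ lam₂,
      f' x ≤ -(1 / (n : ℝ)) * f x * (f x + KΛ) * (f x - KΛ)) :
    f lam₂ - KΛ ≤ Real.exp (-(2 / (n : ℝ)) * KΛ ^ 2 * (lam₂ - lam₁)) * max (f lam₁ - KΛ) 0 ∧
    (KΛ < f lam₁ →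
      f lam₂ ≤ KΛ + Real.exp (-(2 / (n : ℝ)) * KΛ ^ 2 * (lam₂ - lam₁)) * (f lam₁ - KΛ)) ∧
    (f lam₁ ≤ KΛ → f lam₂ ≤ KΛ) := by
  have hnpos : (0:ℝ) < (n:ℝ) := by exact_mod_cast hn
  set K : ℝ := -(2 / (n : ℝ)) * KΛ ^ 2 with hK
  set g : ℝ → ℝ := fun x => max (f x - KΛ) 0 with hg
  set g' : ℝ → ℝ := fun x => if f x ≤ KΛ then 0 else f' x with hg'
  have hfc : ContinuousOn f (Icc lam₁ lam₂) :=
    fun x hx => (hderiv x hx).continuousWithinAt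
  have hgc : ContinuousOn g (Icc lam₁ lam₂) :=
    fun x hx => ((hfc x hx).sub continuousWithinAt_const).max continuousWithinAt_const
  -- slope condition
  have hslope : ∀ x ∈ Ico lam₁ lam₂, ∀ r, g' x < r →
      ∃ᶠ z in 𝓝[>] x, (z - x)⁻¹ * (g z - g x) < r := by
    intro x hx r hr
    have hxIcc : x ∈ Icc lam₁ lam₂ := ⟨hx.1, hx.2.le⟩
    have hxlt : x < lam₂ := hx.2
    have hne : (𝓝[>] x).NeBot := nhdsGT_neBot x
    have hmem : Icc lam₁ lam₂ ∈ 𝓝[>] x := by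
      filter_upwards [Ioo_mem_nhdsGT_of_mem ⟨le_refl x, hxlt⟩] with z hz
      exact ⟨hx.1.trans hz.1.le, hz.2.le⟩
    have hd : HasDerivWithinAt f (f' x) (Ioi x) x :=
      (hderiv x hxIcc).mono_of_mem_nhdsWithin hmem
    have hsl : Tendsto (slope f x) (𝓝[>] x) (𝓝 (f' x)) := by
      have := hasDerivWithinAt_iff_tendsto_slope.1 hd
      refine this.mono_left (nhdsWithin_mono x ?_) |>.congr (fun z => rfl)
      intro z hz; exact ⟨hz, ne_of_gt hz⟩
    -- reduce to eventual statement
    apply Eventually.frequently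
    rcases lt_trichotomy (f x) KΛ with hcase | hcase | hcase
    · -- f x < KΛ : g ≡ 0 near x
      have hfx : ∀ᶠ z in 𝓝[>] x, f z < KΛ := by
        have hc : ContinuousWithinAt f (Ioi x) x :=
          ((hfc x hxIcc).mono_of_mem_nhdsWithin hmem)
        exact hc.eventually_lt continuousWithinAt_const hcase
      have hr0 : (0:ℝ) < r := by
        have : g' x = 0 := if_pos hcase.le
        linarith [hr, this.symm.le]
      filter_upwards [hfx] with z hz
      have hgz : g z = 0 := max_eq_right (by linarith)
      have hgx : g x = 0 := max_eq_right (by linarith)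
      rw [hgz, hgx]; simpa using hr0
    · -- f x = KΛ
      have hg'x : g' x = 0 := if_pos hcase.le
      have hr0 : (0:ℝ) < r := by rw [hg'x] at hr; exact hr
      have hf'le : f' x ≤ 0 := by
        have := hode x hxIcc
        rw [hcase] at this
        simpa using this
      have hev : ∀ᶠ z in 𝓝[>] x, slope f x z < r :=
        hsl.eventually_lt_const (lt_of_le_of_lt hf'le hr0)
      filter_upwards [hev, self_mem_nhdsWithin] with z hz hz'
      have hzx : (0:ℝ) < z - x := sub_pos.2 hz'
      have hgx : g x = 0 := max_eq_right (by rw [hcase]; simp)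
      rw [hgx, sub_zero]
      by_cases hzc : f z ≤ KΛ
      · have : g z = 0 := max_eq_right (by linarith)
        rw [this, mul_zero]; exact hr0
      · push_neg at hzc
        have hgz : g z = f z - KΛ := max_eq_left (by linarith)
        have hsz : slope f x z = (z - x)⁻¹ * (f z - f x) := by
          rw [slope_def_field, div_eq_inv_mul]
        rw [hsz, hcase] at hz
        rw [hgz]; exact hz
    · -- f x > KΛ
      have hg'x : g' x = f' x := if_neg (not_le.2 hcase)
      rw [hg'x] at hr
      have hfx : ∀ᶠ z in 𝓝[>] x, KΛ < f z := by
        have hc : ContinuousWithinAt f (Ioi x) x :=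
          ((hfc x hxIcc).mono_of_mem_nhdsWithin hmem)
        exact hc.eventually_const_lt hcase
      have hev : ∀ᶠ z in 𝓝[>] x, slope f x z < r := hsl.eventually_lt_const hr
      filter_upwards [hev, hfx, self_mem_nhdsWithin] with z hz hz1 hz'
      have hzx : (0:ℝ) < z - x := sub_pos.2 hz'
      have hgz : g z = f z - KΛ := max_eq_left (by linarith)
      have hgx : g x = f x - KΛ := max_eq_left (by linarith)
      rw [hgz, hgx]
      have hsz : slope f x z = (z - x)⁻¹ * (f z - f x) := by
        rw [slope_def_field, div_eq_inv_mul]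
      rw [hsz] at hz
      convert hz using 2; ring
  -- bound condition
  have hbound : ∀ x ∈ Ico lam₁ lam₂, g' x ≤ K * g x + 0 := by
    intro x hx
    have hxIcc : x ∈ Icc lam₁ lam₂ := ⟨hx.1, hx.2.le⟩
    rw [add_zero]
    by_cases hc : f x ≤ KΛ
    · have hg'x : g' x = 0 := if_pos hc
      have hgx : g x = 0 := max_eq_right (by linarith)
      rw [hg'x, hgx, mul_zero]
    · push_neg at hc
      have hg'x : g' x = f' x := if_neg (not_le.2 hc)
      have hgx : g x = f x - KΛ := max_eq_left (by linarith)
      rw [hg'x, hgx]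
      have h1 := hode x hxIcc
      have h2 : 2 * KΛ ^ 2 ≤ f x * (f x + KΛ) := by nlinarith
      have h3 : -(1 / (n : ℝ)) * f x * (f x + KΛ) * (f x - KΛ) ≤ K * (f x - KΛ) := by
        rw [hK]
        have hfxK : (0:ℝ) ≤ f x - KΛ := by linarith
        have hmm := mul_le_mul_of_nonneg_right h2 hfxK
        have hinv : (0:ℝ) < 1 / (n:ℝ) := by positivity
        have h4 := mul_le_mul_of_nonneg_left hmm hinv.le
        calc -(1 / (n : ℝ)) * f x * (f x + KΛ) * (f x - KΛ)
            = -(1/(n:ℝ) * (f x * (f x + KΛ) * (f x - KΛ))) := by ring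
          _ ≤ -(1/(n:ℝ) * (2 * KΛ ^ 2 * (f x - KΛ))) := neg_le_neg h4
          _ = -(2 / (n:ℝ)) * KΛ ^ 2 * (f x - KΛ) := by ring
      linarith
  have key := le_gronwallBound_of_liminf_deriv_right_le hgc hslope (le_refl (g lam₁)) hbound
    lam₂ ⟨hlam, le_refl _⟩
  rw [gronwallBound_ε0] at key
  have hmain : f lam₂ - KΛ ≤ Real.exp (K * (lam₂ - lam₁)) * max (f lam₁ - KΛ) 0 := by
    calc f lam₂ - KΛ ≤ g lam₂ := le_max_left _ _
      _ ≤ g lam₁ * Real.exp (K * (lam₂ - lam₁)) := key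
      _ = Real.exp (K * (lam₂ - lam₁)) * max (f lam₁ - KΛ) 0 := by rw [mul_comm]
  refine ⟨hmain, fun h => ?_, fun h => ?_⟩
  · have : max (f lam₁ - KΛ) 0 = f lam₁ - KΛ := max_eq_left (by linarith)
    rw [this] at hmain; linarith
  · have : max (f lam₁ - KΛ) 0 = 0 := max_eq_right (by linarith)
    rw [this, mul_zero] at hmain; linarith
end

section
/- Let X be a nonempty compact topological space, Λ₀ > 0, and u : X × [0, Λ₀] → ℝ a continuous function such that for every x ∈ X the map λ ↦ u(x, λ) is differentiable, with partial derivative ∂_λ u continuous on X × [0, Λ₀]. Suppose there is a constant C such that ∂_λ u(x, λ) ≤ C whenever (x, λ) satisfies u(x, λ) = max_{y ∈ X} u(y, λ). Then for all (x, λ) ∈ X × [0, Λ₀], u(x, λ) ≤ max_{y ∈ X} u(y, 0) + C·λ. -/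
/-!
Fix `K > C` and the barrier `M + K t`, where `M = max_y u(y, 0)`. The set of times at which all
of `u(·, t)` lies below the barrier is closed, and it propagates to the right: where `u(x, t)`
touches the barrier, `x` is a spatial maximum, so `u' < K` near `(x, t)` and the mean value
theorem keeps `u` below the barrier for a short time near `x`; where `u(x, t)` is strictly below,
continuity does the same. Compactness of `X` makes the time step uniform in `x`. Finally let
`K ↓ C`.
-/

open Set Filter Topology

theorem IsClosed.isClosed_setOf_forall_le_inter {ι β α : Type*} [TopologicalSpace β]
    [TopologicalSpace α] [Preorder α] [OrderClosedTopology α] {f : ι → β → α} {g : β → α}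
    {s : Set β} (hs : IsClosed s) (hf : ∀ i, ContinuousOn (f i) s) (hg : ContinuousOn g s) :
    IsClosed ({x | ∀ i, f i x ≤ g x} ∩ s) := by
  have : {x | ∀ i, f i x ≤ g x} ∩ s = s ∩ ⋂ i, {x ∈ s | f i x ≤ g x} := by
    ext x
    simp only [mem_inter_iff, mem_ofPred_eq, mem_iInter]
    exact ⟨fun ⟨h, hx⟩ ↦ ⟨hx, fun i ↦ ⟨hx, h i⟩⟩, fun ⟨hx, h⟩ ↦ ⟨fun i ↦ (h i).2, hx⟩⟩
  rw [this]
  exact hs.inter (isClosed_iInter fun i ↦ hs.isClosed_le (hf i) hg)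

section

variable {X : Type*} [TopologicalSpace X]

theorem eventually_forall_of_forall_eventually_nhds_prod [CompactSpace X] {Y : Type*}
    {l : Filter Y} {P : X → Y → Prop} (h : ∀ x, ∀ᶠ p in 𝓝 x ×ˢ l, P p.1 p.2) :
    ∀ᶠ y in l, ∀ x, P x y := by
  have := isCompact_univ.mem_nhdsSet_prod_of_forall fun x _ ↦ h x
  rw [nhdsSet_univ, top_prod] at this
  obtain ⟨t, ht, hts⟩ := this
  filter_upwards [ht] with y hy x
  exact hts (show (x, y).2 ∈ t from hy)

variable {u u' : X → ℝ → ℝ} {a b : ℝ}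

theorem eventually_le_add_mul_sub_of_deriv_lt {K t₀ : ℝ} {x₀ : X}
    (hderiv : ∀ x, ∀ t ∈ Icc a b, HasDerivWithinAt (u x) (u' x t) (Icc a b) t)
    (hu' : ContinuousWithinAt (fun p : X × ℝ ↦ u' p.1 p.2) (univ ×ˢ Icc a b) (x₀, t₀))
    (ht₀ : t₀ ∈ Ico a b) (hK : u' x₀ t₀ < K) :
    ∀ᶠ p in 𝓝 x₀ ×ˢ 𝓝[>] t₀, u p.1 p.2 ≤ u p.1 t₀ + K * (p.2 - t₀) := by
  have hlt : ∀ᶠ p in 𝓝 x₀ ×ˢ 𝓝[≥] t₀, u' p.1 p.2 < K := by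
    rw [ContinuousWithinAt, nhdsWithin_prod_eq, nhdsWithin_univ] at hu'
    exact Filter.prod_mono le_rfl (nhdsWithin_le_of_mem (Icc_mem_nhdsGE_of_mem ht₀))
      (hu' (gt_mem_nhds hK))
  obtain ⟨O, hO, V, hV, hOV⟩ := eventually_prod_iff.1 hlt
  obtain ⟨c, hc, hcV⟩ := mem_nhdsGE_iff_exists_Ico_subset.1 hV
  refine eventually_prod_iff.2
    ⟨O, hO, (· ∈ Ioo t₀ (min c b)), Ioo_mem_nhdsGT (lt_min hc ht₀.2), fun {z} hz {ξ} hξ ↦ ?_⟩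
  have hsub : Icc t₀ ξ ⊆ Icc a b :=
    Icc_subset_Icc ht₀.1 (hξ.2.le.trans (min_le_right _ _))
  refine image_le_of_deriv_right_le_deriv_boundary (f' := u' z)
    (B := fun s ↦ u z t₀ + K * (s - t₀)) (B' := fun _ ↦ K)
    (fun s hs ↦ (hderiv z s (hsub hs)).continuousWithinAt.mono hsub)
    (fun s hs ↦ (hderiv z s (hsub (Ico_subset_Icc_self hs))).mono_of_mem_nhdsWithin
      (Icc_mem_nhdsGE_of_mem
        ⟨ht₀.1.trans hs.1, hs.2.trans_le (hsub (right_mem_Icc.2 hξ.1.le)).2⟩))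
    (by simp) (by fun_prop)
    (fun s _ ↦ by
      simpa using (((hasDerivWithinAt_id s (Ici s)).sub_const t₀).const_mul K).const_add (u z t₀))
    (fun s hs ↦ (hOV hz (hcV ⟨hs.1, hs.2.trans (hξ.2.trans_le (min_le_left _ _))⟩)).le)
    (right_mem_Icc.2 hξ.1.le)

theorem le_add_mul_sub_of_deriv_lt_at_argmax [CompactSpace X] {M K : ℝ}
    (hu : ContinuousOn (fun p : X × ℝ ↦ u p.1 p.2) (univ ×ˢ Icc a b))
    (hderiv : ∀ x, ∀ t ∈ Icc a b, HasDerivWithinAt (u x) (u' x t) (Icc a b) t)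
    (hu' : ContinuousOn (fun p : X × ℝ ↦ u' p.1 p.2) (univ ×ˢ Icc a b))
    (hK : ∀ x, ∀ t ∈ Ico a b, (∀ y, u y t ≤ u x t) → u' x t < K)
    (ha : ∀ x, u x a ≤ M) : ∀ x, ∀ t ∈ Icc a b, u x t ≤ M + K * (t - a) := by
  set s := {t | ∀ x, u x t ≤ M + K * (t - a)}
  suffices Icc a b ⊆ s from fun x t ht ↦ this ht x
  have hclosed : IsClosed (s ∩ Icc a b) :=
    isClosed_Icc.isClosed_setOf_forall_le_inter
      (fun x t ht ↦ (hderiv x t ht).continuousWithinAt) (by fun_prop)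
  refine hclosed.Icc_subset_of_forall_mem_nhdsWithin (by simpa [s] using ha) ?_
  rintro t ⟨hts, htI⟩
  refine eventually_forall_of_forall_eventually_nhds_prod fun x ↦ ?_
  have hnhds : 𝓝 x ×ˢ 𝓝[>] t ≤ 𝓝[univ ×ˢ Icc a b] (x, t) := by
    rw [nhdsWithin_prod_eq, nhdsWithin_univ]
    exact Filter.prod_mono le_rfl ((nhdsWithin_mono _ Ioi_subset_Ici_self).trans
      (nhdsWithin_le_of_mem (Icc_mem_nhdsGE_of_mem htI)))
  rcases (hts x).lt_or_eq with hlt | heq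
  · have hcont : ContinuousWithinAt (fun p : X × ℝ ↦ u p.1 p.2) (univ ×ˢ Icc a b) (x, t) :=
      hu _ ⟨mem_univ x, Ico_subset_Icc_self htI⟩
    have hbarrier : Continuous fun p : X × ℝ ↦ M + K * (p.2 - a) := by fun_prop
    exact ((hcont.mono_left hnhds).eventually_lt
      ((hbarrier.tendsto (x, t)).mono_left (hnhds.trans nhdsWithin_le_nhds)) hlt).mono
      fun p hp ↦ hp.le
  · have hmax : ∀ y, u y t ≤ u x t := fun y ↦ heq ▸ hts y
    filter_upwards [eventually_le_add_mul_sub_of_deriv_lt hderiv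
      (hu' _ ⟨mem_univ x, Ico_subset_Icc_self htI⟩) htI (hK x t htI hmax)] with p hp
    linarith [hts p.1]

theorem le_add_mul_sub_of_deriv_le_at_argmax [CompactSpace X] {M C : ℝ}
    (hu : ContinuousOn (fun p : X × ℝ ↦ u p.1 p.2) (univ ×ˢ Icc a b))
    (hderiv : ∀ x, ∀ t ∈ Icc a b, HasDerivWithinAt (u x) (u' x t) (Icc a b) t)
    (hu' : ContinuousOn (fun p : X × ℝ ↦ u' p.1 p.2) (univ ×ˢ Icc a b))
    (hC : ∀ x, ∀ t ∈ Ico a b, (∀ y, u y t ≤ u x t) → u' x t ≤ C)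
    (ha : ∀ x, u x a ≤ M) : ∀ x, ∀ t ∈ Icc a b, u x t ≤ M + C * (t - a) := by
  intro x t ht
  have hK : ∀ K > C, u x t ≤ M + K * (t - a) := fun K hCK ↦
    le_add_mul_sub_of_deriv_lt_at_argmax hu hderiv hu'
      (fun y s hs hmax ↦ (hC y s hs hmax).trans_lt hCK) ha x t ht
  have hlim : Tendsto (fun K ↦ M + K * (t - a)) (𝓝[>] C) (𝓝 (M + C * (t - a))) :=
    ((continuous_const.add (continuous_id.mul continuous_const)).tendsto C).mono_left
      nhdsWithin_le_nhds
  exact ge_of_tendsto hlim (eventually_nhdsWithin_of_forall hK)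

end

theorem stmt_2_general (X : Type*) [TopologicalSpace X] [CompactSpace X]
    (Λ₀ : ℝ) (u u' : X → ℝ → ℝ) (C : ℝ)
    (hu_cont : ContinuousOn (fun p : X × ℝ => u p.1 p.2) (univ ×ˢ Icc 0 Λ₀))
    (hderiv : ∀ x : X, ∀ lam ∈ Icc (0 : ℝ) Λ₀,
      HasDerivWithinAt (u x) (u' x lam) (Icc (0 : ℝ) Λ₀) lam)
    (hu'_cont : ContinuousOn (fun p : X × ℝ => u' p.1 p.2) (univ ×ˢ Icc 0 Λ₀))
    (hC : ∀ x : X, ∀ lam ∈ Icc (0 : ℝ) Λ₀,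
      (∀ y : X, u y lam ≤ u x lam) → u' x lam ≤ C) :
    ∀ x : X, ∀ lam ∈ Icc (0 : ℝ) Λ₀, u x lam ≤ (⨆ y : X, u y 0) + C * lam := by
  intro x lam hlam
  have hslice : Continuous fun y ↦ u y 0 :=
    hu_cont.comp_continuous (continuous_id.prodMk continuous_const)
      fun y ↦ ⟨mem_univ y, left_mem_Icc.2 (hlam.1.trans hlam.2)⟩
  simpa using le_add_mul_sub_of_deriv_le_at_argmax hu_cont hderiv hu'_cont
    (fun y t ht ↦ hC y t (Ico_subset_Icc_self ht))
    (le_ciSup (isCompact_range hslice).bddAbove) x lam hlam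

/-- Maximum-principle lemma ('Hamilton trick') underlying Theorem 4 of the paper:
if `u : X × [0, Λ₀] → ℝ` is continuous on a nonempty compact space `X`, differentiable in
the second variable with continuous partial derivative `u'`, and `u' ≤ C` at every spatial
maximum point of `u`, then `u(x, λ) ≤ max_y u(y, 0) + C·λ`. -/
theorem stmt_2 (X : Type*) [TopologicalSpace X] [CompactSpace X] [Nonempty X]
    (Λ₀ : ℝ) (hΛ₀ : 0 < Λ₀) (u u' : X → ℝ → ℝ) (C : ℝ)
    (hu_cont : ContinuousOn (fun p : X × ℝ => u p.1 p.2) (univ ×ˢ Icc 0 Λ₀))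
    (hderiv : ∀ x : X, ∀ lam ∈ Icc (0 : ℝ) Λ₀,
      HasDerivWithinAt (u x) (u' x lam) (Icc (0 : ℝ) Λ₀) lam)
    (hu'_cont : ContinuousOn (fun p : X × ℝ => u' p.1 p.2) (univ ×ˢ Icc 0 Λ₀))
    (hC : ∀ x : X, ∀ lam ∈ Icc (0 : ℝ) Λ₀,
      (∀ y : X, u y lam ≤ u x lam) → u' x lam ≤ C) :
    ∀ x : X, ∀ lam ∈ Icc (0 : ℝ) Λ₀, u x lam ≤ (⨆ y : X, u y 0) + C * lam :=
  stmt_2_general X Λ₀ u u' C hu_cont hderiv hu'_cont hC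
end

section
/- Let K_Λ > 0 and K_m ≥ K_Λ, and let V : [0, ∞) → (0, ∞) be a differentiable function satisfying, for all λ ≥ 0, both K_Λ²·V(λ) ≤ V'(λ) and V'(λ) ≤ (K_Λ + (K_m − K_Λ)·e^{−K_Λ²·λ})²·V(λ). Then for all λ ≥ 0, 1 ≤ V(λ)/(V(0)·e^{K_Λ²·λ}) ≤ e^{(½·(K_m/K_Λ + 1)² − 2)}. -/
/-!
Both bounds are Grönwall comparisons: if `G' = g` and `f' ≥ g f` (resp. `f' ≤ g f`), then
`f e^{-G}` is monotone (resp. antitone). The lower bound takes `G λ = K_Λ² λ`; the upper one takes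
for `G` the primitive of `(K_Λ + (K_m − K_Λ) e^{−K_Λ² λ})²` vanishing at `0`, which exceeds
`K_Λ² λ` by at most `2(K_m − K_Λ)/K_Λ + (K_m − K_Λ)²/(2K_Λ²) = ½(K_m/K_Λ + 1)² − 2`.
-/
open Set Real

section Comparison

variable {D : Set ℝ} {f f' G g : ℝ → ℝ}

theorem monotoneOn_mul_exp_neg_of_mul_le_deriv (hD : Convex ℝ D)
    (hf : ∀ x ∈ D, HasDerivWithinAt f (f' x) D x) (hG : ∀ x ∈ D, HasDerivWithinAt G (g x) D x)
    (hle : ∀ x ∈ D, g x * f x ≤ f' x) :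
    MonotoneOn (fun t => f t * exp (-G t)) D := by
  have hderiv : ∀ x ∈ D, HasDerivWithinAt (fun t => f t * exp (-G t))
      ((f' x - g x * f x) * exp (-G x)) D x := fun x hx =>
    ((hf x hx).mul (hG x hx).neg.exp).congr_deriv (by simp only [Pi.neg_apply]; ring)
  refine monotoneOn_of_hasDerivWithinAt_nonneg
    (f' := fun x => (f' x - g x * f x) * exp (-G x)) hD
    (fun x hx => (hderiv x hx).continuousWithinAt) (fun x hx => ?_) (fun x hx => ?_)
  · exact (hderiv x (interior_subset hx)).mono interior_subset
  · exact mul_nonneg (sub_nonneg.2 (hle x (interior_subset hx))) (exp_pos _).le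

theorem mul_exp_sub_le_of_mul_le_deriv (hD : Convex ℝ D)
    (hf : ∀ x ∈ D, HasDerivWithinAt f (f' x) D x) (hG : ∀ x ∈ D, HasDerivWithinAt G (g x) D x)
    (hle : ∀ x ∈ D, g x * f x ≤ f' x) {a b : ℝ} (ha : a ∈ D) (hb : b ∈ D) (hab : a ≤ b) :
    f a * exp (G b - G a) ≤ f b := by
  have h := monotoneOn_mul_exp_neg_of_mul_le_deriv hD hf hG hle ha hb hab
  calc f a * exp (G b - G a) = f a * exp (-G a) * exp (G b) := by
        rw [mul_assoc, ← exp_add, neg_add_eq_sub]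
    _ ≤ f b * exp (-G b) * exp (G b) := by gcongr
    _ = f b := by rw [mul_assoc, ← exp_add, neg_add_cancel, exp_zero, mul_one]

theorem le_mul_exp_sub_of_deriv_le_mul (hD : Convex ℝ D)
    (hf : ∀ x ∈ D, HasDerivWithinAt f (f' x) D x) (hG : ∀ x ∈ D, HasDerivWithinAt G (g x) D x)
    (hle : ∀ x ∈ D, f' x ≤ g x * f x) {a b : ℝ} (ha : a ∈ D) (hb : b ∈ D) (hab : a ≤ b) :
    f b ≤ f a * exp (G b - G a) := by
  have h := mul_exp_sub_le_of_mul_le_deriv (f := -f) (f' := -f') hD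
    (fun x hx => (hf x hx).neg) hG (fun x hx => by simpa using hle x hx) ha hb hab
  simpa using h

end Comparison

noncomputable def curvatureBoundPrimitive (k c t : ℝ) : ℝ :=
  k ^ 2 * t + 2 * c / k * (1 - exp (-k ^ 2 * t)) + c ^ 2 / (2 * k ^ 2) * (1 - exp (-k ^ 2 * t) ^ 2)

theorem curvatureBoundPrimitive_zero (k c : ℝ) : curvatureBoundPrimitive k c 0 = 0 := by
  simp [curvatureBoundPrimitive]

theorem hasDerivAt_curvatureBoundPrimitive {k : ℝ} (hk : k ≠ 0) (c t : ℝ) :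
    HasDerivAt (curvatureBoundPrimitive k c) ((k + c * exp (-k ^ 2 * t)) ^ 2) t := by
  have hu : HasDerivAt (fun t => exp (-k ^ 2 * t)) (exp (-k ^ 2 * t) * -k ^ 2) t :=
    ((hasDerivAt_id t).const_mul (-k ^ 2)).exp.congr_deriv (by simp)
  have := (((hasDerivAt_id t).const_mul (k ^ 2)).add ((hu.const_sub 1).const_mul (2 * c / k))).add
    (((hu.pow 2).const_sub 1).const_mul (c ^ 2 / (2 * k ^ 2)))
  refine this.congr_deriv ?_
  field_simp
  ring

theorem curvatureBoundPrimitive_sub_le {k c t : ℝ} (hk : 0 < k) (hc : 0 ≤ c) (ht : 0 ≤ t) :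
    curvatureBoundPrimitive k c t - k ^ 2 * t ≤ 2 * c / k + c ^ 2 / (2 * k ^ 2) := by
  have hu₀ : 0 ≤ exp (-k ^ 2 * t) := (exp_pos _).le
  have hu₁ : exp (-k ^ 2 * t) ≤ 1 := exp_le_one_iff.2 (by nlinarith)
  unfold curvatureBoundPrimitive
  have h₁ : 0 ≤ 2 * c / k := by positivity
  have h₂ : 0 ≤ c ^ 2 / (2 * k ^ 2) := by positivity
  nlinarith [mul_nonneg h₁ hu₀, mul_nonneg h₂ (sq_nonneg (exp (-k ^ 2 * t)))]

/-- Two-sided volume estimate, valid at all flow times: if `V > 0` satisfies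
`K_Λ²·V ≤ V' ≤ (K_Λ + (K_m − K_Λ)e^{−K_Λ²λ})²·V` on `[0, ∞)` with `K_m ≥ K_Λ > 0`, then
`1 ≤ V(λ)/(V(0)·e^{K_Λ²λ}) ≤ e^{½(K_m/K_Λ+1)²−2}` for all `λ ≥ 0`. -/
theorem stmt_7 (KΛ Km : ℝ) (hKΛ : 0 < KΛ) (hKm : KΛ ≤ Km) (V V' : ℝ → ℝ)
    (hVpos : ∀ x ∈ Set.Ici (0 : ℝ), 0 < V x)
    (hderiv : ∀ x ∈ Set.Ici (0 : ℝ), HasDerivWithinAt V (V' x) (Set.Ici (0 : ℝ)) x)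
    (hlow : ∀ x ∈ Set.Ici (0 : ℝ), KΛ ^ 2 * V x ≤ V' x)
    (hhigh : ∀ x ∈ Set.Ici (0 : ℝ),
      V' x ≤ (KΛ + (Km - KΛ) * Real.exp (-KΛ ^ 2 * x)) ^ 2 * V x) :
    ∀ lam ∈ Set.Ici (0 : ℝ),
      1 ≤ V lam / (V 0 * Real.exp (KΛ ^ 2 * lam)) ∧
      V lam / (V 0 * Real.exp (KΛ ^ 2 * lam)) ≤
        Real.exp ((1 / 2) * (Km / KΛ + 1) ^ 2 - 2) := by
  intro lam hlam
  have h0 : (0 : ℝ) ∈ Ici 0 := self_mem_Ici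
  have hden : 0 < V 0 * exp (KΛ ^ 2 * lam) := mul_pos (hVpos 0 h0) (exp_pos _)
  have lower := mul_exp_sub_le_of_mul_le_deriv (g := fun _ => KΛ ^ 2) (convex_Ici 0) hderiv
    (fun x _ => by simpa using ((hasDerivAt_id x).const_mul (KΛ ^ 2)).hasDerivWithinAt)
    hlow h0 hlam hlam
  have upper := le_mul_exp_sub_of_deriv_le_mul (convex_Ici 0) hderiv
    (fun x _ => (hasDerivAt_curvatureBoundPrimitive hKΛ.ne' (Km - KΛ) x).hasDerivWithinAt)
    hhigh h0 hlam hlam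
  have hconst : (1 / 2) * (Km / KΛ + 1) ^ 2 - 2 =
      2 * (Km - KΛ) / KΛ + (Km - KΛ) ^ 2 / (2 * KΛ ^ 2) := by
    field_simp
    ring
  simp only [mul_zero, sub_zero, curvatureBoundPrimitive_zero] at lower upper
  constructor
  · rwa [le_div_iff₀ hden, one_mul]
  · rw [div_le_iff₀ hden, hconst, mul_left_comm, ← exp_add]
    refine upper.trans (mul_le_mul_of_nonneg_left (exp_le_exp.2 ?_) (hVpos 0 h0).le)
    linarith [curvatureBoundPrimitive_sub_le hKΛ (sub_nonneg.2 hKm) hlam]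
end
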